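/- Let u: ℝ² → ℝ be four times continuously differentiable and let (x,y) ∈ ℝ². Then the higher-order dangling-node approximation of u_yy is second-order accurate: the quantity [u(x+h/2, y+h) + u(x−h/2, y+h) + u(x+h/2, y−h) + u(x−h/2, y−h) − 2u(x+h/2, y) − 2u(x−h/2, y)]/(2h²) − u_yy(x,y) is O(h²) as h → 0⁺; that is, there exist constants C > 0 and h₀ > 0 such that its absolute value is at most C h² for all 0 < h < h₀. -/

import Mathlib

/-!
Along the rays through `p = (x, y)` the six-point stencil is `g h + g (-h)`, where
`g t = u (p + t • (a + b)) + u (p + t • (b - a)) - 2 * u (p + t • a)` with `a = (1/2, 0)`,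
`b = (0, 1)`. Since `g 0 = 0` and, by bilinearity of `D²u(p)`, `g''(0) = 2 u_yy(p)`, the claim
reduces to the one-variable estimate `g h + g (-h) = 2 g 0 + g''(0) h² + O(h⁴)`: the odd Taylor
coefficients of the even function `t ↦ g t + g (-t)` vanish, so the cubic Taylor polynomial is
quadratic and the remainder is `O(h⁴)`.
-/

open Set

theorem iteratedDeriv_comp_add_smul {𝕜 E F : Type*} [NontriviallyNormedField 𝕜]
    [NormedAddCommGroup E] [NormedSpace 𝕜 E] [NormedAddCommGroup F] [NormedSpace 𝕜 F]
    {f : E → F} {n : WithTop ℕ∞} (hf : ContDiff 𝕜 n f) {i : ℕ} (hi : i ≤ n) (p v : E) (t : 𝕜) :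
    iteratedDeriv i (fun s => f (p + s • v)) t = iteratedFDeriv 𝕜 i f (p + t • v) (fun _ => v) := by
  have hshift : ContDiff 𝕜 n fun z => f (p + z) := hf.comp (contDiff_const.add contDiff_id)
  have hline : (fun s : 𝕜 => f (p + s • v))
      = (fun z => f (p + z)) ∘ ContinuousLinearMap.smulRight (1 : 𝕜 →L[𝕜] 𝕜) v := by
    ext s; simp
  rw [iteratedDeriv_eq_iteratedFDeriv, hline,
    ContinuousLinearMap.iteratedFDeriv_comp_right _ hshift t hi, iteratedFDeriv_comp_add_left]
  simp

theorem ContDiff.exists_abs_add_comp_neg_sub_le {g : ℝ → ℝ} (hg : ContDiff ℝ 4 g) :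
    ∃ C, ∀ h ∈ Icc (0:ℝ) 1,
      |g h + g (-h) - 2 * g 0 - iteratedDeriv 2 g 0 * h ^ 2| ≤ C * h ^ 4 := by
  have hneg : ContDiff ℝ 4 fun t => g (-t) := hg.comp contDiff_neg
  have hG : ContDiff ℝ 4 fun t => g t + g (-t) := hg.add hneg
  have hderiv : ∀ k ≤ 3, iteratedDerivWithin k (fun t => g t + g (-t)) (Icc 0 1) 0
      = (1 + (-1) ^ k) * iteratedDeriv k g 0 := by
    intro k hk
    have hk4 : (k : WithTop ℕ∞) ≤ 4 := by exact_mod_cast hk.trans (by norm_num)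
    rw [iteratedDerivWithin_eq_iteratedDeriv (uniqueDiffOn_Icc zero_lt_one)
      (hG.contDiffAt.of_le hk4) (by simp),
      iteratedDeriv_fun_add (hg.contDiffAt.of_le hk4) (hneg.contDiffAt.of_le hk4),
      iteratedDeriv_comp_neg, neg_zero, smul_eq_mul]
    ring
  obtain ⟨C, hC⟩ := exists_taylor_mean_remainder_bound (n := 3) zero_le_one hG.contDiffOn
  refine ⟨C, fun h hh => ?_⟩
  have htaylor : taylorWithinEval (fun t => g t + g (-t)) 3 (Icc 0 1) 0 h
      = 2 * g 0 + iteratedDeriv 2 g 0 * h ^ 2 := by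
    simp only [taylor_within_apply, Finset.sum_range_succ, Finset.sum_range_zero,
      hderiv _ le_rfl, hderiv 0 (by norm_num), hderiv 1 (by norm_num), hderiv 2 (by norm_num)]
    norm_num
    ring
  have hremainder := hC h hh
  rw [htaylor] at hremainder
  simpa [← sub_sub] using hremainder

section HalfStencil

variable {E : Type*} [NormedAddCommGroup E] [NormedSpace ℝ E]

def halfStencil (u : E → ℝ) (p a b : E) (t : ℝ) : ℝ :=
  u (p + t • (a + b)) + u (p + t • (b - a)) - 2 * u (p + t • a)

theorem halfStencil_zero (u : E → ℝ) (p a b : E) : halfStencil u p a b 0 = 0 := by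
  simp only [halfStencil, zero_smul, add_zero]
  ring

theorem ContDiff.halfStencil {u : E → ℝ} {n : WithTop ℕ∞} (hu : ContDiff ℝ n u) (p a b : E) :
    ContDiff ℝ n (halfStencil u p a b) := by
  unfold _root_.halfStencil
  fun_prop

theorem iteratedDeriv_two_halfStencil {u : E → ℝ} (hu : ContDiff ℝ 2 u) (p a b : E) :
    iteratedDeriv 2 (halfStencil u p a b) 0 = 2 * iteratedFDeriv ℝ 2 u p ![b, b] := by
  have hline : ∀ v : E, ContDiff ℝ 2 fun t : ℝ => u (p + t • v) := fun v => hu.comp (by fun_prop)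
  unfold halfStencil
  rw [iteratedDeriv_fun_sub ((hline _).add (hline _)).contDiffAt
      (contDiff_const.mul (hline _)).contDiffAt,
    iteratedDeriv_fun_add (hline _).contDiffAt (hline _).contDiffAt,
    iteratedDeriv_const_mul_field, iteratedDeriv_comp_add_smul hu le_rfl,
    iteratedDeriv_comp_add_smul hu le_rfl, iteratedDeriv_comp_add_smul hu le_rfl]
  simp only [zero_smul, add_zero, iteratedFDeriv_two_apply, Matrix.cons_val_zero,
    Matrix.cons_val_one, map_add, map_sub, add_apply, sub_apply]
  ring

end HalfStencil

/-- The dangling-node approximation of `u_yy` is second-order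
accurate for `C⁴` functions. -/
theorem dangling_node_uyy_second_order
    (u : ℝ × ℝ → ℝ) (hu : ContDiff ℝ 4 u) (x y : ℝ) :
    ∃ C > (0:ℝ), ∃ h₀ > (0:ℝ), ∀ h : ℝ, 0 < h → h < h₀ →
      |(u (x + h/2, y + h) + u (x - h/2, y + h) + u (x + h/2, y - h)
          + u (x - h/2, y - h) - 2 * u (x + h/2, y) - 2 * u (x - h/2, y))
            / (2 * h^2)
        - iteratedFDeriv ℝ 2 u (x, y) ![(0, 1), (0, 1)]| ≤ C * h^2 := by
  set g := halfStencil u (x, y) (1/2, 0) (0, 1) with hg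
  obtain ⟨C, hC⟩ := (hu.halfStencil (x, y) (1/2, 0) (0, 1)).exists_abs_add_comp_neg_sub_le
  refine ⟨(|C| + 1) / 2, by positivity, 1, one_pos, fun h h0 h1 => ?_⟩
  have hstencil : u (x + h/2, y + h) + u (x - h/2, y + h) + u (x + h/2, y - h)
      + u (x - h/2, y - h) - 2 * u (x + h/2, y) - 2 * u (x - h/2, y) = g h + g (-h) := by
    simp only [hg, halfStencil, Prod.smul_mk, Prod.mk_add_mk, Prod.mk_sub_mk, smul_eq_mul]
    ring_nf
  have hbound := hC h ⟨h0.le, h1.le⟩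
  rw [halfStencil_zero, iteratedDeriv_two_halfStencil (hu.of_le (by norm_num))] at hbound
  rw [hstencil]
  calc _ = |g h + g (-h) - 2 * 0 - 2 * iteratedFDeriv ℝ 2 u (x, y) ![(0, 1), (0, 1)] * h ^ 2|
        / (2 * h ^ 2) := by
        rw [div_sub' (by positivity), abs_div, abs_of_pos (by positivity : (0:ℝ) < 2 * h ^ 2)]
        ring_nf
    _ ≤ C * h ^ 4 / (2 * h ^ 2) := by gcongr
    _ = C / 2 * h ^ 2 := by field_simp
    _ ≤ (|C| + 1) / 2 * h ^ 2 := by gcongr; linarith [le_abs_self C]
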